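/- Fix M > sum of all edge costs c_{ij}. Among all CVRP solutions (with m routes and no cluster constraint), any solution minimizing the penalized cost c^M also minimizes the number of inter-cluster edges; consequently, if a cluster-contiguous (CluVRP-feasible) solution exists, every c^M-optimal CVRP solution is cluster-contiguous and is an optimal CluVRP solution. -/

import Mathlib

/-!
A route is a closed walk through the depot `none`, and on such a walk `c^M` is `c` plus `M` times
the indicator of an edge that changes cluster or touches the depot; hence
`c^M(s) = c(s) + M * p(s)`, where `p` counts penalized edges. A feasible solution traverses every
edge at most once, so `c(s) ≤ ∑ c < M`, and minimizing `c^M` minimizes `p` first and `c` second.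

If `tᵢ` is the sequence of clusters visited by route `i`, then `p(s) = m + ∑ᵢ (changes(tᵢ) + 1)`.
A nonempty sequence takes at most `changes + 1` distinct values, with equality iff each value
occurs in a single block, and every cluster is visited. So `p(s) ≥ m + N`, with equality iff every
cluster is visited by exactly one route and in one block, i.e. iff `s` is cluster-contiguous.
-/

/-- Cost of a walk given as a list of vertices. -/
def pathCost {α : Type*} (c : α → α → ℝ) : List α → ℝ
  | a :: b :: t => c a b + pathCost c (b :: t)
  | _ => 0

/-- Cost of a single closed route based at the depot (`none`). -/
def routeCost {C : Type*} (c : Option C → Option C → ℝ) (r : List C) : ℝ :=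
  pathCost c ((none :: r.map some) ++ [none])

/-- Total cost of a solution. -/
def solCost {C : Type*} {m : ℕ} (c : Option C → Option C → ℝ)
    (routes : Fin m → List C) : ℝ :=
  ∑ i, routeCost c (routes i)

/-- The penalized cost function `c^M`. -/
def penalizedCost {C : Type*} {N : ℕ} [DecidableEq C] (clu : C → Fin N)
    (c : Option C → Option C → ℝ) (M : ℝ) (a b : Option C) : ℝ :=
  c a b + (if a = none ∨ b = none ∨ Option.map clu a ≠ Option.map clu b then M else 0)

/-- Number of adjacent positions in a list whose two entries differ. -/
def countChanges {α : Type*} [DecidableEq α] : List α → ℕ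
  | a :: b :: t => (if a = b then 0 else 1) + countChanges (b :: t)
  | _ => 0

/-- Number of penalized (inter-cluster or depot-incident) edges of a solution. -/
def penEdgeCount {C : Type*} {N m : ℕ} (clu : C → Fin N) (routes : Fin m → List C) : ℕ :=
  ∑ i, countChanges (((none : Option (Fin N)) :: (routes i).map (fun v => some (clu v))) ++ [none])

/-- CVRP feasibility (m nonempty routes, no cluster constraint). -/
def CVRPFeasible {C : Type*} {m : ℕ} (Q : ℚ) (q : C → ℚ) (routes : Fin m → List C) : Prop :=
  (∀ v : C, ∃! i : Fin m, v ∈ routes i) ∧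
  (∀ i, (routes i).Nodup) ∧
  (∀ i, routes i ≠ []) ∧
  (∀ i, ((routes i).map q).sum ≤ Q)

/-- Cluster contiguity. -/
def ClusterContiguous {C : Type*} {N m : ℕ} (clu : C → Fin N) (routes : Fin m → List C) : Prop :=
  ∀ k : Fin N, ∃ (i : Fin m) (l₁ l₂ l₃ : List C),
    routes i = l₁ ++ l₂ ++ l₃ ∧ ∀ v, v ∈ l₂ ↔ clu v = k

namespace List

variable {α : Type*}

def edges : List α → List (α × α)
  | a :: b :: t => (a, b) :: edges (b :: t)
  | _ => []

@[simp] lemma edges_cons_cons (a b : α) (t : List α) :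
    edges (a :: b :: t) = (a, b) :: edges (b :: t) := rfl

lemma map_fst_edges : ∀ l : List α, (edges l).map Prod.fst = l.dropLast
  | [] | [_] => rfl
  | a :: b :: t => by simp [map_fst_edges (b :: t)]

lemma map_snd_edges : ∀ l : List α, (edges l).map Prod.snd = l.tail
  | [] | [_] => rfl
  | a :: b :: t => by simp [map_snd_edges (b :: t)]

lemma fst_mem_dropLast_of_mem_edges {l : List α} {p : α × α} (hp : p ∈ edges l) :
    p.1 ∈ l.dropLast :=
  map_fst_edges l ▸ mem_map_of_mem hp

lemma snd_mem_tail_of_mem_edges {l : List α} {p : α × α} (hp : p ∈ edges l) : p.2 ∈ l.tail :=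
  map_snd_edges l ▸ mem_map_of_mem hp

lemma Nodup.edges_of_tail {l : List α} (h : l.tail.Nodup) : (edges l).Nodup :=
  (map_snd_edges l ▸ h).of_map _

end List

open List

section Walks

variable {α : Type*}

lemma countChanges_cons_map_some_append_none [DecidableEq α] (a : α) :
    ∀ t : List α, countChanges (some a :: (t.map some ++ [none])) = countChanges (a :: t) + 1
  | [] => rfl
  | b :: t => by
    rw [map_cons, cons_append, countChanges, countChanges_cons_map_some_append_none b t,
      countChanges]
    simp only [Option.some_inj]
    omega

lemma pathCost_eq_sum_edges (c : α → α → ℝ) :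
    ∀ l : List α, pathCost c l = ((edges l).map fun p => c p.1 p.2).sum
  | [] | [_] => rfl
  | a :: b :: t => by simp [pathCost, pathCost_eq_sum_edges c (b :: t)]

lemma countChanges_map {β : Type*} [DecidableEq β] (f : α → β) :
    ∀ l : List α, countChanges (l.map f) =
      ((edges l).map fun p => if f p.1 = f p.2 then 0 else 1).sum
  | [] | [_] => rfl
  | a :: b :: t => by
    have ih := countChanges_map f (b :: t)
    rw [map_cons] at ih
    simp only [map_cons, edges_cons_cons, sum_cons, ← ih]
    rfl

end Walks

namespace List

variable {α : Type*} {x a b : α} {l : List α}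

def OccursContiguously (x : α) (l : List α) : Prop :=
  ∃ l₁ l₂ l₃, l = l₁ ++ l₂ ++ l₃ ∧ (∀ y ∈ l₂, y = x) ∧ x ∉ l₁ ∧ x ∉ l₃

lemma occursContiguously_of_not_mem (h : x ∉ l) : OccursContiguously x l :=
  ⟨l, [], [], by simp, by simp, h, by simp⟩

lemma occursContiguously_cons_of_not_mem (h : a ∉ l) : OccursContiguously a (a :: l) :=
  ⟨[], [a], l, rfl, by simp, by simp, h⟩

namespace OccursContiguously

lemma of_cons (h : OccursContiguously x (a :: l)) : OccursContiguously x l := by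
  obtain ⟨l₁, l₂, l₃, he, h₂, h₁, h₃⟩ := h
  rcases l₁ with _ | ⟨b, l₁⟩
  · rcases l₂ with _ | ⟨b, l₂⟩
    · subst he
      exact occursContiguously_of_not_mem fun hx => h₃ (mem_cons_of_mem _ hx)
    · simp only [nil_append, cons_append, cons.injEq] at he
      exact ⟨[], l₂, l₃, by simp [he.2], fun y hy => h₂ y (mem_cons_of_mem _ hy), by simp, h₃⟩
  · simp only [cons_append, cons.injEq] at he
    exact ⟨l₁, l₂, l₃, he.2, h₂, fun hx => h₁ (mem_cons_of_mem _ hx), h₃⟩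

lemma cons_of_ne (hxa : x ≠ a) (h : OccursContiguously x l) : OccursContiguously x (a :: l) := by
  obtain ⟨l₁, l₂, l₃, rfl, h₂, h₁, h₃⟩ := h
  exact ⟨a :: l₁, l₂, l₃, rfl, h₂, by simp [hxa, h₁], h₃⟩

lemma exists_of_cons_self (h : OccursContiguously a (a :: l)) :
    ∃ l₂ l₃, l = l₂ ++ l₃ ∧ (∀ y ∈ l₂, y = a) ∧ a ∉ l₃ := by
  obtain ⟨l₁, l₂, l₃, he, h₂, h₁, h₃⟩ := h
  rcases l₁ with _ | ⟨b, l₁⟩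
  · rcases l₂ with _ | ⟨b, l₂⟩
    · subst he
      simp at h₃
    · simp only [nil_append, cons_append, cons.injEq] at he
      exact ⟨l₂, l₃, he.2, fun y hy => h₂ y (mem_cons_of_mem _ hy), h₃⟩
  · simp only [cons_append, cons.injEq] at he
    simp [he.1] at h₁

lemma cons_self (h : OccursContiguously a (a :: l)) : OccursContiguously a (a :: a :: l) := by
  obtain ⟨l₂, l₃, rfl, h₂, h₃⟩ := h.exists_of_cons_self
  exact ⟨[], a :: a :: l₂, l₃, rfl, by simpa using h₂, by simp, h₃⟩

lemma not_mem_of_ne (hab : a ≠ b) (h : OccursContiguously a (a :: b :: l)) : a ∉ b :: l := by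
  obtain ⟨l₂, l₃, he, h₂, h₃⟩ := h.exists_of_cons_self
  rcases l₂ with _ | ⟨c, l₂⟩
  · simpa [he] using h₃
  · simp only [cons_append, cons.injEq] at he
    exact absurd (he.1 ▸ h₂ c mem_cons_self) hab.symm

end OccursContiguously

variable [DecidableEq α]

lemma card_toFinset_le_countChanges_add_one : ∀ l : List α, l.toFinset.card ≤ countChanges l + 1
  | [] | [_] => by simp
  | a :: b :: t => by
    have ih := card_toFinset_le_countChanges_add_one (b :: t)
    rw [toFinset_cons, countChanges]
    rcases eq_or_ne a b with rfl | hab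
    · rw [Finset.insert_eq_of_mem (by simp), if_pos rfl]
      omega
    · rw [if_neg hab]
      have := Finset.card_insert_le a (b :: t).toFinset
      omega

lemma card_toFinset_eq_countChanges_add_one_iff :
    ∀ {l : List α}, l ≠ [] → (l.toFinset.card = countChanges l + 1 ↔ ∀ x, OccursContiguously x l)
  | [a], _ => by
    simp only [toFinset_cons, toFinset_nil, insert_empty_eq, Finset.card_singleton, countChanges,
      true_iff]
    intro x
    rcases eq_or_ne x a with rfl | hxa
    · exact occursContiguously_cons_of_not_mem (not_mem_nil)
    · exact occursContiguously_of_not_mem (by simpa using hxa)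
  | a :: b :: t, _ => by
    have ih := card_toFinset_eq_countChanges_add_one_iff (cons_ne_nil b t)
    have hle := card_toFinset_le_countChanges_add_one (b :: t)
    rw [toFinset_cons, countChanges]
    by_cases hmem : a ∈ b :: t
    · rw [Finset.insert_eq_of_mem (mem_toFinset.2 hmem)]
      rcases eq_or_ne a b with rfl | hab
      · rw [if_pos rfl, zero_add, ih]
        refine ⟨fun h x => ?_, fun h x => (h x).of_cons⟩
        rcases eq_or_ne x a with rfl | hxa
        · exact (h x).cons_self
        · exact (h x).cons_of_ne hxa
      · rw [if_neg hab]
        exact ⟨fun h => by omega, fun h => absurd hmem ((h a).not_mem_of_ne hab)⟩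
    · have hab : a ≠ b := by rintro rfl; simp at hmem
      rw [Finset.card_insert_of_notMem (by simpa using hmem), if_neg hab]
      constructor
      · intro h x
        rcases eq_or_ne x a with rfl | hxa
        · exact occursContiguously_cons_of_not_mem hmem
        · exact (ih.1 (by omega) x).cons_of_ne hxa
      · intro h
        have := ih.2 fun x => (h x).of_cons
        omega

end List

lemma Finset.pairwiseDisjoint_of_sum_card_le_card_biUnion {ι α : Type*} [DecidableEq α]
    {s : Finset ι} {t : ι → Finset α} (h : ∑ i ∈ s, (t i).card ≤ (s.biUnion t).card) :
    (s : Set ι).PairwiseDisjoint t := by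
  intro i hi j hj hij
  refine Finset.disjoint_left.2 fun x hxi hxj => hij ?_
  have hinj := Finset.inj_on_of_surj_on_of_card_le (s := s.sigma t) (t := s.biUnion t)
    (fun p _ => p.2) (fun p hp => Finset.mem_biUnion.2 ⟨p.1, (Finset.mem_sigma.1 hp).1,
      (Finset.mem_sigma.1 hp).2⟩)
    (fun x hx => by
      obtain ⟨i, hi, hx⟩ := Finset.mem_biUnion.1 hx
      exact ⟨⟨i, x⟩, Finset.mem_sigma.2 ⟨hi, hx⟩, rfl⟩)
    (by rwa [Finset.card_sigma])
  exact congrArg Sigma.fst (hinj (a₁ := ⟨i, x⟩) (Finset.mem_sigma.2 ⟨hi, hxi⟩) (a₂ := ⟨j, x⟩)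
    (Finset.mem_sigma.2 ⟨hj, hxj⟩) rfl)

lemma sum_sum_map_le_sum_univ {ι β : Type*} [Fintype ι] [Fintype β] [DecidableEq β]
    {f : β → ℝ} (hf : ∀ b, 0 ≤ f b) {L : ι → List β} (hnd : ∀ i, (L i).Nodup)
    (hdisj : Pairwise fun i j => Disjoint (L i) (L j)) :
    ∑ i, ((L i).map f).sum ≤ ∑ b, f b := by
  classical
  calc ∑ i, ((L i).map f).sum = ∑ b ∈ Finset.univ.biUnion fun i => (L i).toFinset, f b := by
        rw [Finset.sum_biUnion fun i _ j _ hij => disjoint_toFinset_iff_disjoint.mpr (hdisj hij)]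
        exact Finset.sum_congr rfl fun i _ => (sum_toFinset f (hnd i)).symm
    _ ≤ ∑ b, f b := Finset.sum_le_univ_sum_of_nonneg hf

section Families

variable {ι α : Type*} [Fintype ι] [Fintype α] [DecidableEq α] {t : ι → List α}

lemma biUnion_toFinset_eq_univ (hcov : ∀ x, ∃ i, x ∈ t i) :
    (Finset.univ.biUnion fun i => (t i).toFinset) = Finset.univ := by
  ext x
  simpa using hcov x

lemma card_le_sum_card_toFinset (hcov : ∀ x, ∃ i, x ∈ t i) :
    Fintype.card α ≤ ∑ i, (t i).toFinset.card := by
  rw [← Finset.card_univ, ← biUnion_toFinset_eq_univ hcov]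
  exact Finset.card_biUnion_le

lemma card_le_sum_countChanges_add_one (hcov : ∀ x, ∃ i, x ∈ t i) :
    Fintype.card α ≤ ∑ i, (countChanges (t i) + 1) :=
  (card_le_sum_card_toFinset hcov).trans <|
    Finset.sum_le_sum fun i _ => card_toFinset_le_countChanges_add_one (t i)

lemma sum_countChanges_add_one_le_card_iff (hne : ∀ i, t i ≠ []) (hcov : ∀ x, ∃ i, x ∈ t i) :
    ∑ i, (countChanges (t i) + 1) ≤ Fintype.card α ↔
      (Pairwise fun i j => Disjoint (t i) (t j)) ∧ ∀ i x, OccursContiguously x (t i) := by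
  have hle i : (t i).toFinset.card ≤ countChanges (t i) + 1 :=
    card_toFinset_le_countChanges_add_one (t i)
  constructor
  · intro h
    have hsum : ∑ i, (t i).toFinset.card = ∑ i, (countChanges (t i) + 1) :=
      le_antisymm (Finset.sum_le_sum fun i _ => hle i)
        (h.trans (card_le_sum_card_toFinset hcov))
    refine ⟨fun i j hij => ?_, fun i => (card_toFinset_eq_countChanges_add_one_iff (hne i)).1
      ((Finset.sum_eq_sum_iff_of_le fun i _ => hle i).1 hsum i (Finset.mem_univ i))⟩
    have hdisj := Finset.pairwiseDisjoint_of_sum_card_le_card_biUnion (s := Finset.univ)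
      (t := fun i => (t i).toFinset) (by rw [hsum, biUnion_toFinset_eq_univ hcov]; exact h)
    exact disjoint_toFinset_iff_disjoint.1 (hdisj (Finset.mem_univ i) (Finset.mem_univ j) hij)
  · rintro ⟨hdisj, hcont⟩
    calc ∑ i, (countChanges (t i) + 1) = ∑ i, (t i).toFinset.card :=
          Finset.sum_congr rfl fun i _ =>
            ((card_toFinset_eq_countChanges_add_one_iff (hne i)).2 (hcont i)).symm
      _ = (Finset.univ.biUnion fun i => (t i).toFinset).card :=
          (Finset.card_biUnion fun i _ j _ hij => disjoint_toFinset_iff_disjoint.2 (hdisj hij)).symm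
      _ ≤ Fintype.card α := Finset.card_le_univ _

end Families

section Routes

variable {C : Type*}

def depotWalk (r : List C) : List (Option C) := (none :: r.map some) ++ [none]

lemma routeCost_eq_pathCost (c : Option C → Option C → ℝ) (r : List C) :
    routeCost c r = pathCost c (depotWalk r) := rfl

@[simp] lemma some_mem_depotWalk {r : List C} {v : C} : some v ∈ depotWalk r ↔ v ∈ r := by
  simp [depotWalk]

lemma none_none_not_mem_edges_depotWalk {r : List C} (hr : r ≠ []) :
    ((none, none) : Option C × Option C) ∉ edges (depotWalk r) := by
  obtain ⟨v, r, rfl⟩ := exists_cons_of_ne_nil hr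
  intro h
  simp only [depotWalk, map_cons, cons_append, edges_cons_cons, mem_cons, Prod.mk.injEq,
    reduceCtorEq, and_false, false_or] at h
  have := fst_mem_dropLast_of_mem_edges h
  rw [← cons_append, dropLast_concat] at this
  simp at this

lemma nodup_edges_depotWalk {r : List C} (hr : r.Nodup) : (edges (depotWalk r)).Nodup :=
  Nodup.edges_of_tail <| by simpa [depotWalk, nodup_append] using hr.map (Option.some_injective C)

lemma countChanges_depotWalk_map {N : ℕ} (clu : C → Fin N) {r : List C}
    (hr : r ≠ []) :
    countChanges ((depotWalk r).map (Option.map clu)) = countChanges (r.map clu) + 2 := by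
  obtain ⟨v, r, rfl⟩ := exists_cons_of_ne_nil hr
  have hwalk : (depotWalk (v :: r)).map (Option.map clu) =
      none :: some (clu v) :: ((r.map clu).map some ++ [none]) := by
    simp [depotWalk]
  rw [hwalk, countChanges, countChanges_cons_map_some_append_none, map_cons]
  simp only [reduceCtorEq, if_false]
  omega

lemma mem_of_mem_edges_depotWalk {r : List C} {p : Option C × Option C} {v : C}
    (hp : p ∈ edges (depotWalk r)) (hv : p.1 = some v ∨ p.2 = some v) : v ∈ r := by
  rw [← some_mem_depotWalk]
  rcases hv with hv | hv
  · exact dropLast_subset _ (hv ▸ fst_mem_dropLast_of_mem_edges hp)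
  · exact tail_subset _ (hv ▸ snd_mem_tail_of_mem_edges hp)

lemma solCost_le_sum [Fintype C] {m : ℕ} {c : Option C → Option C → ℝ} (hnn : ∀ a b, 0 ≤ c a b)
    {s : Fin m → List C} (huniq : ∀ v, ∃! i, v ∈ s i) (hnd : ∀ i, (s i).Nodup)
    (hne : ∀ i, s i ≠ []) :
    solCost c s ≤ ∑ a, ∑ b, c a b := by
  classical
  rw [← Fintype.sum_prod_type']
  simp only [solCost, routeCost_eq_pathCost, pathCost_eq_sum_edges]
  refine sum_sum_map_le_sum_univ (fun p => hnn p.1 p.2) (fun i => nodup_edges_depotWalk (hnd i)) ?_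
  intro i j hij p hpi hpj
  obtain ⟨v, hv⟩ : ∃ v, p.1 = some v ∨ p.2 = some v := by
    rcases p with ⟨_ | v, _ | w⟩
    · exact absurd hpi (none_none_not_mem_edges_depotWalk (hne i))
    all_goals simp
  exact hij ((huniq v).unique (mem_of_mem_edges_depotWalk hpi hv)
    (mem_of_mem_edges_depotWalk hpj hv))

lemma solCost_nonneg {m : ℕ} {c : Option C → Option C → ℝ} (hnn : ∀ a b, 0 ≤ c a b)
    (s : Fin m → List C) : 0 ≤ solCost c s :=
  Finset.sum_nonneg fun i _ => by
    rw [routeCost_eq_pathCost, pathCost_eq_sum_edges]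
    exact sum_nonneg fun x hx => by
      obtain ⟨p, -, rfl⟩ := mem_map.1 hx
      exact hnn p.1 p.2

end Routes

section PenEdgeCount

variable {C : Type*} {N m : ℕ} (clu : C → Fin N)

lemma penEdgeCount_eq_sum (s : Fin m → List C) :
    penEdgeCount clu s = ∑ i, countChanges ((depotWalk (s i)).map (Option.map clu)) := by
  simp [penEdgeCount, depotWalk, Function.comp_def]

lemma penEdgeCount_eq {s : Fin m → List C} (hne : ∀ i, s i ≠ []) :
    penEdgeCount clu s = m + ∑ i, (countChanges ((s i).map clu) + 1) := by
  simp only [penEdgeCount_eq_sum, countChanges_depotWalk_map clu (hne _), Finset.sum_add_distrib,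
    Finset.sum_const, Finset.card_univ, Fintype.card_fin, smul_eq_mul]
  ring

end PenEdgeCount

section PenalizedCost

variable {C : Type*} [DecidableEq C] {N m : ℕ} (clu : C → Fin N) (c : Option C → Option C → ℝ)
  (M : ℝ)

-- The depot loop `(none, none)` is the one edge on which `c^M` and the change count disagree;
-- nonempty routes never use it.
lemma penalizedCost_of_ne {a b : Option C} (h : (a, b) ≠ (none, none)) :
    penalizedCost clu c M a b = c a b + M * if a.map clu = b.map clu then 0 else 1 := by
  rcases a with _ | a <;> rcases b with _ | b <;> simp_all [penalizedCost]

lemma routeCost_penalizedCost {r : List C} (hr : r ≠ []) :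
    routeCost (penalizedCost clu c M) r =
      routeCost c r + M * countChanges ((depotWalk r).map (Option.map clu)) := by
  rw [routeCost_eq_pathCost, routeCost_eq_pathCost, pathCost_eq_sum_edges, pathCost_eq_sum_edges,
    countChanges_map, Nat.cast_list_sum, map_map, ← sum_map_mul_left, ← sum_map_add]
  refine congrArg sum (map_congr_left fun p hp => ?_)
  rw [penalizedCost_of_ne clu c M (ne_of_mem_of_not_mem hp (none_none_not_mem_edges_depotWalk hr))]
  simp

lemma solCost_penalizedCost {s : Fin m → List C} (hne : ∀ i, s i ≠ []) :
    solCost (penalizedCost clu c M) s = solCost c s + M * penEdgeCount clu s := by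
  rw [solCost, solCost, penEdgeCount_eq_sum, Nat.cast_sum, Finset.mul_sum,
    ← Finset.sum_add_distrib]
  exact Finset.sum_congr rfl fun i _ => routeCost_penalizedCost clu c M (hne i)

end PenalizedCost

section Clusters

variable {C : Type*} {N m : ℕ} {clu : C → Fin N} {s : Fin m → List C}

lemma ClusterContiguous.disjoint_and_occursContiguously (h : ClusterContiguous clu s)
    (huniq : ∀ v, ∃! i, v ∈ s i) (hnd : ∀ i, (s i).Nodup) :
    (Pairwise fun i j => Disjoint ((s i).map clu) ((s j).map clu)) ∧
      ∀ i k, OccursContiguously k ((s i).map clu) := by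
  have hroute {k i j} (hk : k ∈ (s i).map clu)
      (hj : ∃ l₁ l₂ l₃, s j = l₁ ++ l₂ ++ l₃ ∧ ∀ v, v ∈ l₂ ↔ clu v = k) : i = j := by
    obtain ⟨l₁, l₂, l₃, hj, hl₂⟩ := hj
    obtain ⟨v, hv, rfl⟩ := mem_map.1 hk
    exact (huniq v).unique hv (by simp [hj, (hl₂ v).2 rfl])
  refine ⟨fun i j hij k hki hkj => ?_, fun i k => ?_⟩
  · obtain ⟨j₀, hj₀⟩ := h k
    exact hij ((hroute hki hj₀).trans (hroute hkj hj₀).symm)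
  · by_cases hk : k ∈ (s i).map clu
    · obtain ⟨j, l₁, l₂, l₃, hj, hl₂⟩ := h k
      obtain rfl := hroute hk ⟨l₁, l₂, l₃, hj, hl₂⟩
      have hnd' : (l₁ ++ l₂ ++ l₃).Nodup := hj ▸ hnd i
      refine ⟨l₁.map clu, l₂.map clu, l₃.map clu, by simp [hj], ?_, ?_, ?_⟩
      · simp only [mem_map]
        rintro _ ⟨w, hw, rfl⟩
        exact (hl₂ w).1 hw
      · simp only [mem_map, not_exists, not_and]
        exact fun w hw₁ hw => disjoint_of_nodup_append hnd'.of_append_left hw₁ ((hl₂ w).2 hw)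
      · simp only [mem_map, not_exists, not_and]
        exact fun w hw₃ hw =>
          disjoint_of_nodup_append hnd' (mem_append_right l₁ ((hl₂ w).2 hw)) hw₃
    · exact occursContiguously_of_not_mem hk

lemma clusterContiguous_of_disjoint_of_occursContiguously (hsurj : Function.Surjective clu)
    (hcover : ∀ v, ∃ i, v ∈ s i)
    (hdisj : Pairwise fun i j => Disjoint ((s i).map clu) ((s j).map clu))
    (hcont : ∀ i k, OccursContiguously k ((s i).map clu)) :
    ClusterContiguous clu s := by
  intro k
  obtain ⟨v, rfl⟩ := hsurj k
  obtain ⟨i, hvi⟩ := hcover v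
  obtain ⟨u₁, u₂, u₃, hu, hu₂, hu₁, hu₃⟩ := hcont i (clu v)
  obtain ⟨l₁₂, l₃, hs, hm₁₂, hm₃⟩ := map_eq_append_iff.1 hu
  obtain ⟨l₁, l₂, rfl, hm₁, hm₂⟩ := map_eq_append_iff.1 hm₁₂
  refine ⟨i, l₁, l₂, l₃, hs, fun w => ⟨fun hw => hu₂ _ (hm₂ ▸ mem_map_of_mem hw), fun hw => ?_⟩⟩
  obtain ⟨j, hwj⟩ := hcover w
  obtain rfl : j = i := by
    by_contra hji
    exact hdisj hji (mem_map_of_mem hwj) (hw ▸ mem_map_of_mem hvi)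
  rw [hs, mem_append, mem_append] at hwj
  rcases hwj with (hw₁ | hw₂) | hw₃
  · exact absurd (hm₁ ▸ mem_map_of_mem hw₁) (hw ▸ hu₁)
  · exact hw₂
  · exact absurd (hm₃ ▸ mem_map_of_mem hw₃) (hw ▸ hu₃)

lemma clusterContiguous_iff (hsurj : Function.Surjective clu) (huniq : ∀ v, ∃! i, v ∈ s i)
    (hnd : ∀ i, (s i).Nodup) :
    ClusterContiguous clu s ↔
      (Pairwise fun i j => Disjoint ((s i).map clu) ((s j).map clu)) ∧
        ∀ i k, OccursContiguously k ((s i).map clu) :=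
  ⟨fun h => h.disjoint_and_occursContiguously huniq hnd, fun h =>
    clusterContiguous_of_disjoint_of_occursContiguously hsurj (fun v => (huniq v).exists) h.1 h.2⟩

lemma exists_mem_map_of_surjective (hsurj : Function.Surjective clu) (hcover : ∀ v, ∃ i, v ∈ s i)
    (k : Fin N) : ∃ i, k ∈ (s i).map clu := by
  obtain ⟨v, rfl⟩ := hsurj k
  obtain ⟨i, hi⟩ := hcover v
  exact ⟨i, mem_map_of_mem hi⟩

lemma add_le_penEdgeCount (hsurj : Function.Surjective clu) (hcover : ∀ v, ∃ i, v ∈ s i)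
    (hne : ∀ i, s i ≠ []) : m + N ≤ penEdgeCount clu s := by
  rw [penEdgeCount_eq clu hne]
  simpa using card_le_sum_countChanges_add_one (exists_mem_map_of_surjective hsurj hcover)

lemma penEdgeCount_le_iff_clusterContiguous (hsurj : Function.Surjective clu)
    (huniq : ∀ v, ∃! i, v ∈ s i) (hnd : ∀ i, (s i).Nodup) (hne : ∀ i, s i ≠ []) :
    penEdgeCount clu s ≤ m + N ↔ ClusterContiguous clu s := by
  rw [penEdgeCount_eq clu hne, Nat.add_le_add_iff_left, clusterContiguous_iff hsurj huniq hnd,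
    ← sum_countChanges_add_one_le_card_iff (by simpa using hne)
      (exists_mem_map_of_surjective hsurj fun v => (huniq v).exists), Fintype.card_fin]

end Clusters

lemma le_of_add_mul_le_add_mul {a b M : ℝ} {x y : ℕ} (ha : 0 ≤ a) (hb₀ : 0 ≤ b) (hb : b < M)
    (h : a + M * x ≤ b + M * y) : x ≤ y := by
  by_contra! hxy
  have hxy' : (y : ℝ) + 1 ≤ x := by exact_mod_cast hxy
  nlinarith

/-- Fix `M` larger than the sum of all edge costs.  Every `c^M`-optimal CVRP
solution minimizes the number of penalized (inter-cluster) edges; consequently,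
if a cluster-contiguous solution exists, every `c^M`-optimal CVRP solution is
cluster-contiguous and is an optimal CluVRP solution. -/
theorem bigM_reduction {C : Type*} [Fintype C] [DecidableEq C] {N m : ℕ}
    (Q : ℚ) (q : C → ℚ) (clu : C → Fin N) (hsurj : Function.Surjective clu)
    (c : Option C → Option C → ℝ) (hnn : ∀ a b, 0 ≤ c a b)
    (M : ℝ) (hM : (∑ a : Option C, ∑ b : Option C, c a b) < M)
    (s : Fin m → List C) (hs : CVRPFeasible Q q s)
    (hopt : ∀ s' : Fin m → List C, CVRPFeasible Q q s' →
      solCost (penalizedCost clu c M) s ≤ solCost (penalizedCost clu c M) s') :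
    (∀ s' : Fin m → List C, CVRPFeasible Q q s' →
      penEdgeCount clu s ≤ penEdgeCount clu s') ∧
    ((∃ s₀ : Fin m → List C, CVRPFeasible Q q s₀ ∧ ClusterContiguous clu s₀) →
      ClusterContiguous clu s ∧
      ∀ s' : Fin m → List C, CVRPFeasible Q q s' → ClusterContiguous clu s' →
        solCost c s ≤ solCost c s') := by
  have hdecomp {s' : Fin m → List C} (h : CVRPFeasible Q q s') :
      solCost (penalizedCost clu c M) s' = solCost c s' + M * penEdgeCount clu s' :=
    solCost_penalizedCost clu c M h.2.2.1
  have hcost {s' : Fin m → List C} (h : CVRPFeasible Q q s') :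
      0 ≤ solCost c s' ∧ solCost c s' < M :=
    ⟨solCost_nonneg hnn s', (solCost_le_sum hnn h.1 h.2.1 h.2.2.1).trans_lt hM⟩
  have hcontig {s' : Fin m → List C} (h : CVRPFeasible Q q s') :
      penEdgeCount clu s' ≤ m + N ↔ ClusterContiguous clu s' :=
    penEdgeCount_le_iff_clusterContiguous hsurj h.1 h.2.1 h.2.2.1
  have hmin : ∀ s', CVRPFeasible Q q s' → penEdgeCount clu s ≤ penEdgeCount clu s' :=
    fun s' hs' => le_of_add_mul_le_add_mul (hcost hs).1 (hcost hs').1 (hcost hs').2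
      (hdecomp hs ▸ hdecomp hs' ▸ hopt s' hs')
  refine ⟨hmin, fun ⟨s₀, hs₀, hc₀⟩ => ⟨(hcontig hs).1 ((hmin s₀ hs₀).trans ((hcontig hs₀).2 hc₀)),
    fun s' hs' hc' => ?_⟩⟩
  have hpen : (penEdgeCount clu s' : ℝ) ≤ penEdgeCount clu s := by
    exact_mod_cast ((hcontig hs').2 hc').trans
      (add_le_penEdgeCount hsurj (fun v => (hs.1 v).exists) hs.2.2.1)
  have hM₀ : 0 ≤ M := (hcost hs).1.trans (hcost hs).2.le
  have := hdecomp hs ▸ hdecomp hs' ▸ hopt s' hs'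
  linarith [mul_le_mul_of_nonneg_left hpen hM₀]
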